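/- Facet composition preserves saturation count: suppose there exist d₁ linearly independent points q_i in an affine subspace ω₁ saturating a supporting inequality B'(q) = β', plus one additional point r making {q_i} ∪ {r} a basis of the (d₁+1)-dimensional linear span of ω₁, and analogously d₂ points q'_j and r' for ω₂. Then among the tensor products {q_i ⊗ r'_j} ∪ {r_i ⊗ q'_j} (where r-indexed families include the extra points), one obtains d₁d₂ + d₁ + d₂ linearly independent points saturating the product inequality (B'(P_A) - β')(B''(P_B) - β'') evaluated at zero. -/

import Mathlib

/-!
The points are a subfamily of the products of two linearly independent families, hence
linearly independent over a field. Each of them has a factor `q_i` or `q'_j`, on which the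
corresponding factor `B' - β' w` or `B'' - β'' w'` of `C` vanishes; the pair `r ⊗ r'` is the one
product left out.
-/

open scoped TensorProduct

def tensorSnocIndex {m n : ℕ} : (Fin m × Fin n) ⊕ Fin m ⊕ Fin n → Fin (m + 1) × Fin (n + 1) :=
  Sum.elim (Prod.map Fin.castSucc Fin.castSucc)
    (Sum.elim (fun i => (i.castSucc, Fin.last n)) (fun j => (Fin.last m, j.castSucc)))

lemma tensorSnocIndex_injective {m n : ℕ} :
    Function.Injective (tensorSnocIndex : (Fin m × Fin n) ⊕ Fin m ⊕ Fin n → _) := by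
  rintro (⟨i, j⟩ | i | j) (⟨i', j'⟩ | i' | j') h <;>
    simp_all [tensorSnocIndex, Fin.castSucc_ne_last, (Fin.castSucc_ne_last _).symm]

lemma sub_smul_apply_eq_zero {R M : Type*} [CommRing R] [AddCommGroup M] [Module R M]
    {B w : M →ₗ[R] R} {β : R} {x : M} (hB : B x = β) (hw : w x = 1) :
    (B - β • w) x = 0 := by
  simp [hB, hw]

theorem stmt15 {p q : ℕ} (d₁ d₂ : ℕ)
    (B' w : (Fin p → ℝ) →ₗ[ℝ] ℝ) (B'' w' : (Fin q → ℝ) →ₗ[ℝ] ℝ) (β' β'' : ℝ)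
    (qv : Fin d₁ → (Fin p → ℝ)) (r : Fin p → ℝ)
    (qv' : Fin d₂ → (Fin q → ℝ)) (r' : Fin q → ℝ)
    (hind : LinearIndependent ℝ (Fin.snoc qv r : Fin (d₁ + 1) → (Fin p → ℝ)))
    (hind' : LinearIndependent ℝ (Fin.snoc qv' r' : Fin (d₂ + 1) → (Fin q → ℝ)))
    (hsat : ∀ i, B' (qv i) = β') (hw : ∀ i, w (qv i) = 1)
    (hsat' : ∀ j, B'' (qv' j) = β'') (hw' : ∀ j, w' (qv' j) = 1) :
    let C : TensorProduct ℝ (Fin p → ℝ) (Fin q → ℝ) →ₗ[ℝ] ℝ :=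
      (LinearMap.mul' ℝ ℝ).comp (TensorProduct.map (B' - β' • w) (B'' - β'' • w'))
    let F : (Fin d₁ × Fin d₂) ⊕ Fin d₁ ⊕ Fin d₂ →
        TensorProduct ℝ (Fin p → ℝ) (Fin q → ℝ) :=
      fun idx => match idx with
        | Sum.inl (i, j) => qv i ⊗ₜ[ℝ] qv' j
        | Sum.inr (Sum.inl i) => qv i ⊗ₜ[ℝ] r'
        | Sum.inr (Sum.inr j) => r ⊗ₜ[ℝ] qv' j
    LinearIndependent ℝ F ∧ ∀ idx, C (F idx) = 0 := by
  intro C F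
  have hF : F = (fun ij : Fin (d₁ + 1) × Fin (d₂ + 1) =>
      (Fin.snoc qv r : Fin (d₁ + 1) → _) ij.1 ⊗ₜ[ℝ] (Fin.snoc qv' r' : Fin (d₂ + 1) → _) ij.2) ∘
        tensorSnocIndex := by
    funext idx
    rcases idx with ⟨i, j⟩ | i | j <;> simp [F, tensorSnocIndex]
  have hzero : ∀ i, (B' - β' • w) (qv i) = 0 := fun i => sub_smul_apply_eq_zero (hsat i) (hw i)
  have hzero' : ∀ j, (B'' - β'' • w') (qv' j) = 0 :=
    fun j => sub_smul_apply_eq_zero (hsat' j) (hw' j)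
  refine ⟨hF ▸ (hind.tmul_of_isDomain hind').comp _ tensorSnocIndex_injective, ?_⟩
  rintro (⟨i, j⟩ | i | j) <;> simp [C, F, hzero, hzero']
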